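/- arXiv:2303.17793 — 2 statements merged into one kernel-verified Lean document; each statement's English description precedes it below -/
import Mathlib

section
/- Let f : ℝ³ → ℝ⁵ be the Veronese map f(x₀,x₁,x₂) = (1/√3)·(2x₀x₁, x₀² − x₁², 2x₀x₂, 2x₁x₂, (x₀² + x₁² − 2x₂²)/√3). There exists a topological embedding g of the real projective plane ℙ(ℝ³) into ℝ⁵ whose image is contained in the unit sphere of ℝ⁵ and which is induced by f, in the sense that g([x]) = f(x) for every x ∈ ℝ³ with ‖x‖² = 3/2, where [x] denotes the line through x. -/
/-! The Veronese map is homogeneous quadratic with `‖f x‖ = (2/3)‖x‖²`, so `x ↦ f x / ‖f x‖`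
is constant on lines, descends to a continuous map from the compact space `ℙ(ℝ³)` to the unit
sphere, and agrees with `f` where `‖x‖² = 3/2`. The coordinates of `f u` together with `‖u‖²`
determine all products `uᵢ uⱼ`, hence `u` up to sign, so the descended map is injective; a
continuous injection from a compact space to a Hausdorff space is an embedding. -/

open scoped LinearAlgebra.Projectivization

/-- The Veronese map `f : ℝ³ → ℝ⁵`,
`f(x₀,x₁,x₂) = (1/√3)·(2x₀x₁, x₀² − x₁², 2x₀x₂, 2x₁x₂, (x₀² + x₁² − 2x₂²)/√3)`. -/
noncomputable def veronese (x : EuclideanSpace ℝ (Fin 3)) : EuclideanSpace ℝ (Fin 5) :=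
  (WithLp.equiv 2 (Fin 5 → ℝ)).symm <|
    (1 / Real.sqrt 3) •
      ![2 * x 0 * x 1,
        x 0 ^ 2 - x 1 ^ 2,
        2 * x 0 * x 2,
        2 * x 1 * x 2,
        (x 0 ^ 2 + x 1 ^ 2 - 2 * x 2 ^ 2) / Real.sqrt 3]

/-- The real projective plane, as the projectivization of `ℝ³`, carries the quotient
topology induced from `ℝ³ \ {0}`. -/
noncomputable instance : TopologicalSpace (ℙ ℝ (EuclideanSpace ℝ (Fin 3))) :=
  instTopologicalSpaceQuotient

namespace Projectivization

theorem lift_injective {K V α : Type*} [DivisionRing K] [AddCommGroup V] [Module K V]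
    (f : { v : V // v ≠ 0 } → α)
    (hf : ∀ (a b : { v : V // v ≠ 0 }) (t : K), a = t • (b : V) → f a = f b)
    (hinj : ∀ a b, f a = f b → ∃ t : K, t • (b : V) = a) :
    Function.Injective (Projectivization.lift f hf) := by
  intro p q hpq
  induction p with | h v hv => induction q with | h w hw =>
  exact (mk_eq_mk_iff' K v w hv hw).2 (hinj ⟨v, hv⟩ ⟨w, hw⟩ hpq)

section Topology

variable {E : Type*} [NormedAddCommGroup E] [NormedSpace ℝ E]

noncomputable local instance : TopologicalSpace (ℙ ℝ E) := instTopologicalSpaceQuotient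

theorem compactSpace_of_finiteDimensional [FiniteDimensional ℝ E] : CompactSpace (ℙ ℝ E) := by
  let s : Metric.sphere (0 : E) 1 → ℙ ℝ E := fun v => mk ℝ v (ne_zero_of_mem_unit_sphere v)
  have hs : Function.Surjective s := by
    intro p
    induction p with | h v hv =>
    refine ⟨⟨‖v‖⁻¹ • v, ?_⟩, (mk_eq_mk_iff' ℝ _ _ _ hv).2 ⟨‖v‖⁻¹, rfl⟩⟩
    rw [mem_sphere_zero_iff_norm, norm_smul, norm_inv, norm_norm,
      inv_mul_cancel₀ (norm_ne_zero_iff.2 hv)]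
  exact hs.compactSpace (continuous_quotient_mk'.comp (continuous_subtype_val.subtype_mk _))

theorem isClosedEmbedding_lift [FiniteDimensional ℝ E] {X : Type*} [TopologicalSpace X]
    [T2Space X] (f : { v : E // v ≠ 0 } → X)
    (hf : ∀ (a b : { v : E // v ≠ 0 }) (t : ℝ), a = t • (b : E) → f a = f b)
    (hcont : Continuous f) (hinj : ∀ a b, f a = f b → ∃ t : ℝ, t • (b : E) = a) :
    Topology.IsClosedEmbedding (Projectivization.lift f hf) :=
  have := compactSpace_of_finiteDimensional (E := E)
  have hcont' : Continuous (Projectivization.lift f hf) := hcont.quotient_lift _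
  hcont'.isClosedEmbedding (lift_injective f hf hinj)

end Topology

end Projectivization

theorem Pi.eq_or_eq_neg_of_forall_mul_eq_mul {ι R : Type*} [CommRing R] [IsDomain R]
    {u w : ι → R} (h : ∀ i j, u i * u j = w i * w j) : w = u ∨ w = -u := by
  by_cases hu : u = 0
  · subst hu
    left
    ext i
    simpa using h i i
  obtain ⟨i, hi⟩ := Function.ne_iff.1 hu
  rcases mul_self_eq_mul_self_iff.1 (h i i) with hii | hii
  · left
    ext j
    apply mul_left_cancel₀ hi
    rw [h i j, hii]
  · right
    ext j
    apply mul_left_cancel₀ hi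
    rw [Pi.neg_apply]
    linear_combination h i j + w j * hii

theorem EuclideanSpace.norm_sq_eq_fin_three (x : EuclideanSpace ℝ (Fin 3)) :
    ‖x‖ ^ 2 = x 0 ^ 2 + x 1 ^ 2 + x 2 ^ 2 := by
  simp [EuclideanSpace.norm_sq_eq, Fin.sum_univ_three]

lemma veronese_apply (x : EuclideanSpace ℝ (Fin 3)) (i : Fin 5) :
    veronese x i = (1 / Real.sqrt 3) *
      ![2 * x 0 * x 1, x 0 ^ 2 - x 1 ^ 2, 2 * x 0 * x 2, 2 * x 1 * x 2,
        (x 0 ^ 2 + x 1 ^ 2 - 2 * x 2 ^ 2) / Real.sqrt 3] i :=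
  rfl

@[fun_prop]
theorem continuous_veronese : Continuous veronese := by
  unfold veronese
  simp only [WithLp.equiv_symm_apply]
  fun_prop

theorem veronese_smul (c : ℝ) (x : EuclideanSpace ℝ (Fin 3)) :
    veronese (c • x) = c ^ 2 • veronese x := by
  ext i
  fin_cases i <;> simp [veronese_apply] <;> ring

theorem norm_veronese (x : EuclideanSpace ℝ (Fin 3)) : ‖veronese x‖ = 2 / 3 * ‖x‖ ^ 2 := by
  have h3 : Real.sqrt 3 ^ 2 = 3 := Real.sq_sqrt (by norm_num)
  rw [← sq_eq_sq₀ (norm_nonneg _) (by positivity), EuclideanSpace.norm_sq_eq,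
    EuclideanSpace.norm_sq_eq_fin_three]
  simp only [Fin.sum_univ_five, veronese_apply, Real.norm_eq_abs, sq_abs, mul_pow, div_pow, h3,
    Matrix.cons_val_zero, Matrix.cons_val_one, Matrix.cons_val]
  ring

theorem veronese_ne_zero {x : EuclideanSpace ℝ (Fin 3)} (hx : x ≠ 0) : veronese x ≠ 0 := by
  rw [← norm_ne_zero_iff, norm_veronese]
  positivity

theorem mul_eq_mul_of_veronese_eq {u w : EuclideanSpace ℝ (Fin 3)}
    (h : veronese u = veronese w) (i j : Fin 3) : u i * u j = w i * w j := by
  have hnorm : u 0 ^ 2 + u 1 ^ 2 + u 2 ^ 2 = w 0 ^ 2 + w 1 ^ 2 + w 2 ^ 2 := by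
    have := congrArg norm h
    rw [norm_veronese, norm_veronese] at this
    rw [← EuclideanSpace.norm_sq_eq_fin_three, ← EuclideanSpace.norm_sq_eq_fin_three]
    linarith
  have h3 : Real.sqrt 3 ≠ 0 := by positivity
  have hcoord := smul_right_injective _ (one_div_ne_zero h3) ((WithLp.equiv 2 _).symm.injective h)
  simp only [Matrix.vecCons_inj, div_left_inj' h3] at hcoord
  obtain ⟨e0, e1, e2, e3, e4, -⟩ := hcoord
  fin_cases i <;> fin_cases j <;> simp <;> linarith

theorem eq_or_eq_neg_of_veronese_eq {u w : EuclideanSpace ℝ (Fin 3)}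
    (h : veronese u = veronese w) : w = u ∨ w = -u := by
  rcases Pi.eq_or_eq_neg_of_forall_mul_eq_mul (mul_eq_mul_of_veronese_eq h) with h' | h'
  · exact .inl (WithLp.ofLp_injective _ h')
  · exact .inr (WithLp.ofLp_injective _ h')

noncomputable def normalizedVeronese (x : EuclideanSpace ℝ (Fin 3)) : EuclideanSpace ℝ (Fin 5) :=
  ‖veronese x‖⁻¹ • veronese x

theorem normalizedVeronese_smul {c : ℝ} (hc : c ≠ 0) (x : EuclideanSpace ℝ (Fin 3)) :
    normalizedVeronese (c • x) = normalizedVeronese x := by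
  rw [normalizedVeronese, normalizedVeronese, veronese_smul, norm_smul, smul_smul]
  simp [hc]

theorem normalizedVeronese_eq_veronese_smul (x : EuclideanSpace ℝ (Fin 3)) :
    normalizedVeronese x = veronese (Real.sqrt ‖veronese x‖⁻¹ • x) := by
  rw [veronese_smul, Real.sq_sqrt (inv_nonneg.2 (norm_nonneg _)), normalizedVeronese]

theorem norm_normalizedVeronese {x : EuclideanSpace ℝ (Fin 3)} (hx : x ≠ 0) :
    ‖normalizedVeronese x‖ = 1 :=
  norm_smul_inv_norm (veronese_ne_zero hx)

theorem normalizedVeronese_of_norm_sq {x : EuclideanSpace ℝ (Fin 3)} (hx : ‖x‖ ^ 2 = 3 / 2) :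
    normalizedVeronese x = veronese x := by
  rw [normalizedVeronese, norm_veronese, hx]
  norm_num

theorem exists_smul_eq_of_normalizedVeronese_eq {v w : EuclideanSpace ℝ (Fin 3)} (hv : v ≠ 0)
    (h : normalizedVeronese v = normalizedVeronese w) : ∃ t : ℝ, t • w = v := by
  rw [normalizedVeronese_eq_veronese_smul, normalizedVeronese_eq_veronese_smul] at h
  set a := Real.sqrt ‖veronese v‖⁻¹
  set b := Real.sqrt ‖veronese w‖⁻¹
  have ha : a ≠ 0 := by positivity [veronese_ne_zero hv]
  rcases eq_or_eq_neg_of_veronese_eq h with h' | h'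
  · exact ⟨a⁻¹ * b, by rw [mul_smul, h', inv_smul_smul₀ ha]⟩
  · exact ⟨-(a⁻¹ * b), by rw [neg_smul, mul_smul, h', smul_neg, neg_neg, inv_smul_smul₀ ha]⟩

theorem continuous_normalizedVeronese :
    Continuous fun v : { v : EuclideanSpace ℝ (Fin 3) // v ≠ 0 } => normalizedVeronese v := by
  unfold normalizedVeronese
  fun_prop (disch := exact fun v => norm_ne_zero_iff.2 (veronese_ne_zero v.2))

/-- There is a topological embedding `g` of the real projective plane `ℙ(ℝ³)` into `ℝ⁵`
whose image lies in the unit sphere of `ℝ⁵` and which is induced by the Veronese map, in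
the sense that `g([x]) = f(x)` for every `x` with `‖x‖² = 3/2`. -/
theorem veronese_descends_to_projective_embedding :
    ∃ g : ℙ ℝ (EuclideanSpace ℝ (Fin 3)) → EuclideanSpace ℝ (Fin 5),
      Topology.IsEmbedding g ∧
      (∀ p, g p ∈ Metric.sphere (0 : EuclideanSpace ℝ (Fin 5)) 1) ∧
      (∀ (x : EuclideanSpace ℝ (Fin 3)) (hx : ‖x‖ ^ 2 = 3 / 2),
        g (Projectivization.mk ℝ x (by intro h; rw [h] at hx; simp at hx; linarith)) =
          veronese x) := by
  have hf : ∀ (a b : { v : EuclideanSpace ℝ (Fin 3) // v ≠ 0 }) (t : ℝ),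
      (a : EuclideanSpace ℝ (Fin 3)) = t • (b : EuclideanSpace ℝ (Fin 3)) →
      normalizedVeronese a = normalizedVeronese b := by
    rintro ⟨-, ha⟩ b t rfl
    exact normalizedVeronese_smul (left_ne_zero_of_smul ha) b
  refine ⟨Projectivization.lift (fun v => normalizedVeronese v) hf, ?_, ?_, ?_⟩
  · exact (Projectivization.isClosedEmbedding_lift _ hf continuous_normalizedVeronese
      fun a b h => exists_smul_eq_of_normalizedVeronese_eq a.2 h).isEmbedding
  · intro p
    induction p with | h v hv =>
    exact mem_sphere_zero_iff_norm.2 (norm_normalizedVeronese hv)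
  · intro x hx
    exact normalizedVeronese_of_norm_sq hx
end

section
/- Let u : ℝ² → ℝ be a twice continuously differentiable function, let v₁, v₂ ∈ ℝ² be linearly independent vectors, and suppose u is doubly periodic: u(x + v₁) = u(x) and u(x + v₂) = u(x) for all x ∈ ℝ². If u satisfies the equation Δu(x) + 2‖∇u(x)‖² = 0 for every x ∈ ℝ², where Δu is the Euclidean Laplacian and ∇u the gradient of u, then u is constant. -/
/-!
Over a period parallelogram `x + [0,1]v₁ + [0,1]v₂`, every term `∂ⱼ(∂ⱼu)` of the Laplacian
integrates to zero: writing `eⱼ` in terms of `v₁, v₂`, it is a combination of derivatives of the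
periodic function `∂ⱼu` along a period, and by Fubini each of these may be integrated first along
that period, where the fundamental theorem of calculus gives zero. The equation then forces
`∫ ‖∇u‖² = 0` over the parallelogram, so the continuous function `‖∇u‖²` vanishes at `x`; hence
`u` is constant.
-/

open MeasureTheory Set

section Periodic

theorem Function.Periodic.fderiv {𝕜 E F : Type*} [NontriviallyNormedField 𝕜]
    [NormedAddCommGroup E] [NormedSpace 𝕜 E] [NormedAddCommGroup F] [NormedSpace 𝕜 F]
    {u : E → F} {v : E} (h : Function.Periodic u v) : Function.Periodic (fderiv 𝕜 u) v :=
  fun x => by rw [← fderiv_comp_add_right, funext h]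

variable {E F : Type*} [NormedAddCommGroup E] [NormedSpace ℝ E]
  [NormedAddCommGroup F] [NormedSpace ℝ F]

theorem integrableOn_unitSquare_fderiv_apply {g : E → F} (hg : ContDiff ℝ 1 g) (p v₁ v₂ w : E) :
    IntegrableOn (fun z : ℝ × ℝ => fderiv ℝ g (p + z.1 • v₁ + z.2 • v₂) w)
      (Icc 0 1 ×ˢ Icc 0 1) := by
  have := hg.continuous_fderiv one_ne_zero
  exact ContinuousOn.integrableOn_compact (isCompact_Icc.prod isCompact_Icc) (by fun_prop)

variable [CompleteSpace F]

theorem integral_Icc_fderiv_apply_eq_zero_of_periodic {g : E → F} (hg : ContDiff ℝ 1 g)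
    {v : E} (hper : Function.Periodic g v) (p : E) :
    ∫ s in Icc (0 : ℝ) 1, fderiv ℝ g (p + s • v) v = 0 := by
  have hderiv : ∀ s : ℝ, HasDerivAt (fun s => g (p + s • v)) (fderiv ℝ g (p + s • v) v) s :=
    fun s => ((hg.differentiable one_ne_zero).differentiableAt.hasFDerivAt).comp_hasDerivAt s
      (((hasDerivAt_id s).smul_const v).const_add p |>.congr_deriv (by simp))
  have hcont : Continuous fun s : ℝ => fderiv ℝ g (p + s • v) v := by
    have := hg.continuous_fderiv one_ne_zero
    fun_prop
  rw [integral_Icc_eq_integral_Ioc, ← intervalIntegral.integral_of_le zero_le_one,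
    intervalIntegral.integral_eq_sub_of_hasDerivAt (fun s _ => hderiv s)
      (hcont.intervalIntegrable 0 1)]
  simp [hper p]

theorem setIntegral_unitSquare_fderiv_apply_right_eq_zero {g : E → F} (hg : ContDiff ℝ 1 g)
    {v₂ : E} (hper : Function.Periodic g v₂) (p v₁ : E) :
    ∫ z in Icc (0 : ℝ) 1 ×ˢ Icc (0 : ℝ) 1, fderiv ℝ g (p + z.1 • v₁ + z.2 • v₂) v₂ = 0 := by
  rw [Measure.volume_eq_prod,
    setIntegral_prod _ (integrableOn_unitSquare_fderiv_apply hg p v₁ v₂ v₂)]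
  simp [integral_Icc_fderiv_apply_eq_zero_of_periodic hg hper]

theorem setIntegral_unitSquare_fderiv_apply_left_eq_zero {g : E → F} (hg : ContDiff ℝ 1 g)
    {v₁ : E} (hper : Function.Periodic g v₁) (p v₂ : E) :
    ∫ z in Icc (0 : ℝ) 1 ×ˢ Icc (0 : ℝ) 1, fderiv ℝ g (p + z.1 • v₁ + z.2 • v₂) v₁ = 0 := by
  rw [Measure.volume_eq_prod, ← setIntegral_prod_swap, ← Measure.volume_eq_prod]
  simpa only [Prod.fst_swap, Prod.snd_swap, add_right_comm _ (_ • v₁)] using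
    setIntegral_unitSquare_fderiv_apply_right_eq_zero hg hper p v₂

theorem setIntegral_unitSquare_fderiv_apply_eq_zero {g : E → F} (hg : ContDiff ℝ 1 g)
    {v₁ v₂ : E} (hper₁ : Function.Periodic g v₁) (hper₂ : Function.Periodic g v₂) (p : E)
    {w : E} (hw : w ∈ Submodule.span ℝ {v₁, v₂}) :
    ∫ z in Icc (0 : ℝ) 1 ×ˢ Icc (0 : ℝ) 1, fderiv ℝ g (p + z.1 • v₁ + z.2 • v₂) w = 0 := by
  obtain ⟨a, b, rfl⟩ := Submodule.mem_span_pair.mp hw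
  simp only [map_add, map_smul]
  rw [integral_add ((integrableOn_unitSquare_fderiv_apply hg p v₁ v₂ v₁).fun_smul a)
      ((integrableOn_unitSquare_fderiv_apply hg p v₁ v₂ v₂).fun_smul b),
    integral_smul, integral_smul,
    setIntegral_unitSquare_fderiv_apply_left_eq_zero hg hper₁,
    setIntegral_unitSquare_fderiv_apply_right_eq_zero hg hper₂]
  simp

theorem setIntegral_unitSquare_sum_fderiv_fderiv_eq_zero {u : E → F} (hu : ContDiff ℝ 2 u)
    {v₁ v₂ : E} (hper₁ : Function.Periodic u v₁) (hper₂ : Function.Periodic u v₂)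
    (hspan : Submodule.span ℝ {v₁, v₂} = ⊤) {ι : Type*} [Fintype ι] (e : ι → E) (p : E) :
    ∫ z in Icc (0 : ℝ) 1 ×ˢ Icc (0 : ℝ) 1,
      ∑ j, fderiv ℝ (fun y => fderiv ℝ u y (e j)) (p + z.1 • v₁ + z.2 • v₂) (e j) = 0 := by
  have hg : ∀ j, ContDiff ℝ 1 fun y => fderiv ℝ u y (e j) := fun j =>
    (hu.fderiv_right (by norm_num)).clm_apply contDiff_const
  rw [integral_finsetSum _ fun j _ => integrableOn_unitSquare_fderiv_apply (hg j) p v₁ v₂ (e j)]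
  exact Finset.sum_eq_zero fun j _ =>
    setIntegral_unitSquare_fderiv_apply_eq_zero (hg j) (hper₁.fderiv.comp (· (e j)))
      (hper₂.fderiv.comp (· (e j))) p (hspan ▸ Submodule.mem_top)

end Periodic

theorem eqOn_zero_of_setIntegral_eq_zero {X : Type*} [TopologicalSpace X] [MeasurableSpace X]
    {μ : Measure X} [μ.IsOpenPosMeasure] {f : X → ℝ} {s : Set X}
    (hf : Continuous f) (hf₀ : 0 ≤ f) (hfi : IntegrableOn f s μ)
    (hs : s ⊆ closure (interior s)) (h : ∫ x in s, f x ∂μ = 0) : EqOn f 0 s :=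
  Measure.eqOn_of_ae_eq ((setIntegral_eq_zero_iff_of_nonneg_ae (.of_forall hf₀) hfi).mp h)
    hf.continuousOn continuousOn_const hs

/-- Let `u : ℝ² → ℝ` be `C²` and doubly periodic with respect to two linearly
independent periods `v₁, v₂`. If `Δu + 2‖∇u‖² = 0` everywhere, where `Δu` is the
Euclidean Laplacian and `∇u` the gradient, then `u` is constant. -/
theorem doubly_periodic_solution_is_constant
    (u : EuclideanSpace ℝ (Fin 2) → ℝ) (hu : ContDiff ℝ 2 u)
    (v₁ v₂ : EuclideanSpace ℝ (Fin 2)) (hindep : LinearIndependent ℝ ![v₁, v₂])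
    (hper₁ : ∀ x, u (x + v₁) = u x) (hper₂ : ∀ x, u (x + v₂) = u x)
    (heq : ∀ x,
      (∑ j : Fin 2,
        fderiv ℝ (fun y => fderiv ℝ u y (EuclideanSpace.single j 1)) x
          (EuclideanSpace.single j 1))
        + 2 * ‖gradient u x‖ ^ 2 = 0) :
    ∀ x y, u x = u y := by
  have hspan : Submodule.span ℝ {v₁, v₂} = ⊤ := by
    simpa [Matrix.range_cons_cons_empty, Set.pair_comm] using
      hindep.span_eq_top_of_card_eq_finrank' (by simp)
  refine is_const_of_fderiv_eq_zero (hu.differentiable two_ne_zero) fun x => ?_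
  set f : ℝ × ℝ → ℝ := fun z => ‖fderiv ℝ u (x + z.1 • v₁ + z.2 • v₂)‖ ^ 2 with hf
  have hfc : Continuous f := ((hu.continuous_fderiv two_ne_zero).norm.pow 2).comp (by fun_prop)
  have hlap : ∀ y, ∑ j : Fin 2, fderiv ℝ (fun y => fderiv ℝ u y (EuclideanSpace.single j 1)) y
      (EuclideanSpace.single j 1) = -(2 * ‖fderiv ℝ u y‖ ^ 2) := fun y => by
    rw [← toDual_gradient, LinearIsometryEquiv.norm_map]
    linarith [heq y]
  have hint : ∫ z in Icc (0 : ℝ) 1 ×ˢ Icc (0 : ℝ) 1, f z = 0 := by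
    simpa only [hlap, integral_neg, integral_const_mul, neg_eq_zero, mul_eq_zero, two_ne_zero,
      false_or] using setIntegral_unitSquare_sum_fderiv_fderiv_eq_zero hu hper₁ hper₂ hspan
        (fun j => EuclideanSpace.single j 1) x
  have hzero := eqOn_zero_of_setIntegral_eq_zero hfc (fun z => by positivity)
    (hfc.continuousOn.integrableOn_compact (isCompact_Icc.prod isCompact_Icc))
    (by rw [interior_prod_eq, interior_Icc, closure_prod_eq, closure_Ioo zero_ne_one])
    hint (x := ((0 : ℝ), (0 : ℝ))) (by simp)
  simpa [hf] using hzero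
end
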